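/- arXiv:2309.14120 — 3 statements merged into one kernel-verified Lean document; each statement's English description precedes it below -/
import Mathlib

section
/- For the conjugate Gaussian similarity function g of the previous context with fixed n ≥ 2 and fixed sample mean x̄, g(x_1,…,x_n) is maximized (over configurations with that mean) when all x_i are equal, i.e., when the sample variance Σ_i (x_i − x̄)² is zero, and g is strictly decreasing in Σ_i (x_i − x̄)². -/
/-!
Conjugacy makes `g` explicit. For fixed `σ² = s`, writing `Σᵢ (xᵢ - μ)² = S + n (x̄ - μ)²` and
completing the square in `μ` turns the `μ`-integral into a Gaussian integral, leaving
`(2πs)^(-n/2) √(1/(nc+1)) exp (-(S + K) / (2s))` with `K = n x̄² / (nc+1)`. Against the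
inverse-gamma density the `s`-integral is a gamma integral, so
`g = C · (b + (S + K) / 2) ^ (-(n/2 + a))` with `C > 0`. For fixed `x̄` this is strictly
decreasing in `S`, and the constant configuration at `x̄` has `S = 0`.
-/

open MeasureTheory Real Finset

/-- Gaussian density with mean `m`, variance `v`, evaluated at `x`. -/
noncomputable def gpdf (m v x : ℝ) : ℝ :=
  (Real.sqrt (2 * Real.pi * v))⁻¹ * Real.exp (-((x - m) ^ 2) / (2 * v))

/-- Inverse-gamma density with shape `a` and rate `b`. -/
noncomputable def igpdf (a b x : ℝ) : ℝ :=
  b ^ a / Real.Gamma a * x ^ (-(a + 1)) * Real.exp (-b / x)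

/-- The conjugate Gaussian similarity function
`g(x) = ∫∫ ∏ᵢ N(xᵢ; μ, σ²) N(μ; 0, cσ²) IG(σ²; a, b) dμ dσ²`. -/
noncomputable def gSim (n : ℕ) (a b c : ℝ) (x : Fin n → ℝ) : ℝ :=
  ∫ s in Set.Ioi (0 : ℝ),
    (∫ μ : ℝ, (∏ i, gpdf μ s (x i)) * gpdf 0 (c * s) μ) * igpdf a b s

theorem Finset.sum_sub_sq_eq_sum_sub_mean_sq_add {ι K : Type*} [Field K] [CharZero K]
    (s : Finset ι) (f : ι → K) (μ : K) :
    ∑ i ∈ s, (f i - μ) ^ 2 =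
      ∑ i ∈ s, (f i - (∑ j ∈ s, f j) / #s) ^ 2 + #s * ((∑ j ∈ s, f j) / #s - μ) ^ 2 := by
  rcases s.eq_empty_or_nonempty with rfl | hs
  · simp
  set m := (∑ j ∈ s, f j) / #s with hm
  have hsum : ∑ j ∈ s, f j = #s * m := by
    rw [hm, mul_div_cancel₀ _ (Nat.cast_ne_zero.2 hs.card_pos.ne')]
  have hsq (i : ι) : (f i - μ) ^ 2 = (f i - m) ^ 2 + 2 * (m - μ) * f i - (m ^ 2 - μ ^ 2) := by
    ring
  rw [sum_congr rfl fun i _ => hsq i, sum_sub_distrib, sum_add_distrib, ← mul_sum, hsum,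
    sum_const, nsmul_eq_mul]
  ring

theorem mul_sub_sq_add_sq_div_eq {K : Type*} [Field K] {n c m μ : K} (hc : c ≠ 0)
    (hnc : n * c + 1 ≠ 0) :
    n * (m - μ) ^ 2 + μ ^ 2 / c =
      (n * c + 1) / c * (μ - n * c * m / (n * c + 1)) ^ 2 + n * m ^ 2 / (n * c + 1) := by
  field_simp
  ring

theorem integral_exp_neg_mul_sub_sq (b β : ℝ) :
    ∫ x : ℝ, exp (-b * (x - β) ^ 2) = √(π / b) :=
  (integral_sub_right_eq_self (fun t => exp (-b * t ^ 2)) β).trans (integral_gaussian b)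

theorem integral_rpow_neg_mul_exp_neg_div_Ioi {p D : ℝ} (hp : 0 < p) (hD : 0 < D) :
    ∫ s in Set.Ioi (0 : ℝ), s ^ (-(p + 1)) * exp (-(D / s)) = Gamma p * D ^ (-p) := by
  rw [rpow_neg hD.le, ← inv_rpow hD.le, mul_comm, ← one_div,
    ← integral_rpow_mul_exp_neg_mul_Ioi hp hD,
    ← integral_comp_rpow_Ioi (fun t => t ^ (p - 1) * exp (-(D * t))) (p := -1) (by norm_num)]
  refine setIntegral_congr_fun measurableSet_Ioi fun s (hs : 0 < s) => ?_
  simp only [smul_eq_mul, rpow_neg_one]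
  rw [inv_rpow hs.le, ← rpow_neg hs.le, mul_comm D s⁻¹, inv_mul_eq_div, abs_neg, abs_one,
    one_mul, mul_left_comm, ← mul_assoc, ← rpow_add hs]
  ring_nf

noncomputable def sampleMean {n : ℕ} (x : Fin n → ℝ) : ℝ := (∑ i, x i) / n

noncomputable def sumSqDev {n : ℕ} (x : Fin n → ℝ) : ℝ := ∑ i, (x i - sampleMean x) ^ 2

theorem sumSqDev_nonneg {n : ℕ} (x : Fin n → ℝ) : 0 ≤ sumSqDev x :=
  sum_nonneg fun _ _ => sq_nonneg _

theorem sum_sub_sq_eq_sumSqDev_add {n : ℕ} (x : Fin n → ℝ) (μ : ℝ) :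
    ∑ i, (x i - μ) ^ 2 = sumSqDev x + n * (sampleMean x - μ) ^ 2 := by
  have h := sum_sub_sq_eq_sum_sub_mean_sq_add univ x μ
  rw [card_fin] at h
  exact h

theorem prod_gpdf_mul_gpdf_eq {n : ℕ} {c s : ℝ} (hc : 0 < c) (x : Fin n → ℝ) (μ : ℝ) :
    (∏ i, gpdf μ s (x i)) * gpdf 0 (c * s) μ =
      (√(2 * π * s))⁻¹ ^ n * (√(2 * π * (c * s)))⁻¹ *
        exp (-((sumSqDev x + n * sampleMean x ^ 2 / (n * c + 1)) / (2 * s))) *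
        exp (-((n * c + 1) / (2 * c * s)) * (μ - n * c * sampleMean x / (n * c + 1)) ^ 2) := by
  have hnc : (n : ℝ) * c + 1 ≠ 0 := by positivity
  have hexponent : ∑ i, -(x i - μ) ^ 2 / (2 * s) + -(μ - 0) ^ 2 / (2 * (c * s)) =
      -((sumSqDev x + n * sampleMean x ^ 2 / (n * c + 1)) / (2 * s)) +
        -((n * c + 1) / (2 * c * s)) * (μ - n * c * sampleMean x / (n * c + 1)) ^ 2 := by
    rw [← sum_div, sum_neg_distrib, sum_sub_sq_eq_sumSqDev_add]
    linear_combination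
      (-1 / (2 * s)) * mul_sub_sq_add_sq_div_eq (m := sampleMean x) (μ := μ) hc.ne' hnc
  simp only [gpdf, prod_mul_distrib, prod_const, card_fin, ← exp_sum]
  rw [mul_mul_mul_comm, ← exp_add, hexponent, exp_add]
  ring

theorem integral_prod_gpdf_mul_gpdf {n : ℕ} {c s : ℝ} (hc : 0 < c) (hs : 0 < s)
    (x : Fin n → ℝ) :
    ∫ μ, (∏ i, gpdf μ s (x i)) * gpdf 0 (c * s) μ =
      (√(2 * π * s))⁻¹ ^ n * √(1 / (n * c + 1)) *
        exp (-((sumSqDev x + n * sampleMean x ^ 2 / (n * c + 1)) / (2 * s))) := by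
  have hnc : (0 : ℝ) < n * c + 1 := by positivity
  have hsqrt :
      √(π / ((n * c + 1) / (2 * c * s))) = √(2 * π * (c * s)) * √(1 / (n * c + 1)) := by
    rw [← sqrt_mul (by positivity)]
    congr 1
    field_simp
  simp_rw [prod_gpdf_mul_gpdf_eq (s := s) hc]
  rw [integral_const_mul, integral_exp_neg_mul_sub_sq, hsqrt]
  have : √(2 * π * (c * s)) ≠ 0 := by positivity
  field_simp

noncomputable def gSimConst (n : ℕ) (a b c : ℝ) : ℝ :=
  (√(2 * π))⁻¹ ^ n * √(1 / (n * c + 1)) * (b ^ a / Gamma a) * Gamma (n / 2 + a)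

theorem gSimConst_pos {n : ℕ} {a b c : ℝ} (ha : 0 < a) (hb : 0 < b) (hc : 0 < c) :
    0 < gSimConst n a b c := by
  have : 0 < b ^ a := rpow_pos_of_pos hb a
  unfold gSimConst
  positivity

theorem gSim_eq {n : ℕ} {a b c : ℝ} (ha : 0 < a) (hb : 0 < b) (hc : 0 < c) (x : Fin n → ℝ) :
    gSim n a b c x = gSimConst n a b c *
      (b + (sumSqDev x + n * sampleMean x ^ 2 / (n * c + 1)) / 2) ^ (-(n / 2 + a) : ℝ) := by
  set D := b + (sumSqDev x + n * sampleMean x ^ 2 / (n * c + 1)) / 2 with hD_def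
  have hD : 0 < D := by have := sumSqDev_nonneg x; positivity
  have hintegrand : ∀ s ∈ Set.Ioi (0 : ℝ),
      (∫ μ, (∏ i, gpdf μ s (x i)) * gpdf 0 (c * s) μ) * igpdf a b s =
        (√(2 * π))⁻¹ ^ n * √(1 / (n * c + 1)) * (b ^ a / Gamma a) *
          (s ^ (-((n / 2 + a) + 1)) * exp (-(D / s))) := by
    intro s (hs : 0 < s)
    have hpow : (√(2 * π * s))⁻¹ ^ n = (√(2 * π))⁻¹ ^ n * s ^ (-(n / 2 : ℝ)) := by
      rw [sqrt_mul (by positivity), mul_inv, mul_pow, sqrt_eq_rpow s, ← rpow_neg hs.le,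
        ← rpow_mul_natCast hs.le, neg_mul, one_div_mul_eq_div]
    have hexp : exp (-((sumSqDev x + n * sampleMean x ^ 2 / (n * c + 1)) / (2 * s))) *
        exp (-b / s) = exp (-(D / s)) := by
      rw [← exp_add, hD_def]
      congr 1
      field_simp
      ring
    rw [integral_prod_gpdf_mul_gpdf hc hs, igpdf, hpow, ← hexp,
      show -((n / 2 + a) + 1) = -(n / 2 : ℝ) + -(a + 1) by ring, rpow_add hs]
    ring
  rw [gSim, setIntegral_congr_fun measurableSet_Ioi hintegrand, integral_const_mul,
    integral_rpow_neg_mul_exp_neg_div_Ioi (by positivity) hD, gSimConst]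
  ring

theorem gSim_lt_gSim_of_sumSqDev_lt {n : ℕ} {a b c : ℝ} (ha : 0 < a) (hb : 0 < b) (hc : 0 < c)
    {x x' : Fin n → ℝ} (hmean : sampleMean x = sampleMean x') (hlt : sumSqDev x < sumSqDev x') :
    gSim n a b c x' < gSim n a b c x := by
  rw [gSim_eq ha hb hc, gSim_eq ha hb hc, ← hmean]
  refine mul_lt_mul_of_pos_left (rpow_lt_rpow_of_neg ?_ ?_ ?_) (gSimConst_pos ha hb hc)
  · have := sumSqDev_nonneg x
    positivity
  · gcongr
  · have : (0 : ℝ) ≤ n := n.cast_nonneg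
    linarith

theorem sampleMean_const {n : ℕ} (hn : n ≠ 0) (m : ℝ) :
    sampleMean (fun _ : Fin n => m) = m := by
  simp [sampleMean, hn]

theorem sumSqDev_const {n : ℕ} (hn : n ≠ 0) (m : ℝ) : sumSqDev (fun _ : Fin n => m) = 0 := by
  simp [sumSqDev, sampleMean_const hn]

/-- For fixed sample mean, the conjugate Gaussian similarity `g` is strictly
decreasing in the sum of squared deviations `S = Σᵢ (xᵢ - x̄)²`; in particular it is
maximized when all `xᵢ` are equal (i.e. `S = 0`). -/
theorem conjugate_gaussian_similarity_max_at_equal (n : ℕ) (hn : 2 ≤ n)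
    (a b c : ℝ) (ha : 0 < a) (hb : 0 < b) (hc : 0 < c) :
    (∀ x x' : Fin n → ℝ,
      (∑ i, x i) / n = (∑ i, x' i) / n →
      (∑ i, (x i - (∑ i, x i) / n) ^ 2) < (∑ i, (x' i - (∑ i, x' i) / n) ^ 2) →
      gSim n a b c x' < gSim n a b c x) ∧
    (∀ x : Fin n → ℝ,
      0 < ∑ i, (x i - (∑ i, x i) / n) ^ 2 →
      gSim n a b c x < gSim n a b c (fun _ => (∑ i, x i) / n)) := by
  have hn0 : n ≠ 0 := by omega
  refine ⟨fun x x' hmean hlt => gSim_lt_gSim_of_sumSqDev_lt ha hb hc hmean hlt,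
    fun x hpos => gSim_lt_gSim_of_sumSqDev_lt ha hb hc (sampleMean_const hn0 _) ?_⟩
  rwa [sumSqDev_const hn0]
end

section
/- For the beta-binomial similarity function for binary covariates, g(x_1,…,x_n) = ∫_0^1 θ^s (1−θ)^{n−s} dBeta(θ; α, α) where s = Σ_i x_i, and with symmetric parameter α > 0, g is maximized over s ∈ {0,1,…,n} at s = 0 and s = n, i.e., when all binary values in the cluster are equal. -/
open MeasureTheory Real

/-- Beta function `B(x,y) = Γ(x)Γ(y)/Γ(x+y)`. -/
noncomputable def betaFn (x y : ℝ) : ℝ := Real.Gamma x * Real.Gamma y / Real.Gamma (x + y)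

/-- Symmetric Beta(α,α) density at θ. -/
noncomputable def betaPdf (α θ : ℝ) : ℝ := θ ^ (α - 1) * (1 - θ) ^ (α - 1) / betaFn α α

lemma betaFn_pos {x y : ℝ} (hx : 0 < x) (hy : 0 < y) : 0 < betaFn x y := by
  unfold betaFn
  have := Real.Gamma_pos_of_pos hx
  have := Real.Gamma_pos_of_pos hy
  have := Real.Gamma_pos_of_pos (add_pos hx hy)
  positivity

lemma real_betaIntegral {a b : ℝ} (ha : 0 < a) (hb : 0 < b) :
    ∫ x in Set.Ioo (0:ℝ) 1, x ^ (a - 1) * (1 - x) ^ (b - 1) = betaFn a b := by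
  have hab : Real.Gamma (a + b) ≠ 0 := (Real.Gamma_pos_of_pos (add_pos ha hb)).ne'
  have h1 : Complex.betaIntegral a b = ((betaFn a b : ℝ) : ℂ) := by
    have hmul := Complex.Gamma_mul_Gamma_eq_betaIntegral (s := a) (t := b)
      (by simpa using ha) (by simpa using hb)
    have hG : Complex.Gamma ((a : ℂ) + b) = ((Real.Gamma (a + b) : ℝ) : ℂ) := by
      rw [← Complex.ofReal_add, Complex.Gamma_ofReal]
    have hab' : Complex.Gamma ((a : ℂ) + b) ≠ 0 := by
      rw [hG]; exact_mod_cast hab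
    have : Complex.betaIntegral a b
        = Complex.Gamma a * Complex.Gamma b / Complex.Gamma ((a : ℂ) + b) := by
      rw [eq_div_iff hab']; linear_combination -hmul
    rw [this, Complex.Gamma_ofReal, Complex.Gamma_ofReal, hG, betaFn]
    push_cast
    ring
  have h2 : Complex.betaIntegral a b
      = ((∫ x in Set.Ioo (0:ℝ) 1, x ^ (a - 1) * (1 - x) ^ (b - 1) : ℝ) : ℂ) := by
    rw [Complex.betaIntegral, intervalIntegral.integral_of_le zero_le_one,
      MeasureTheory.integral_Ioc_eq_integral_Ioo]
    have hfun : ∀ x ∈ Set.Ioo (0:ℝ) 1,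
        (x : ℂ) ^ ((a : ℂ) - 1) * ((1 : ℂ) - x) ^ ((b : ℂ) - 1)
          = ((x ^ (a - 1) * (1 - x) ^ (b - 1) : ℝ) : ℂ) := by
      intro x hx
      have hx0 : (0:ℝ) ≤ x := le_of_lt hx.1
      have hx1 : (0:ℝ) ≤ 1 - x := by linarith [hx.2]
      rw [Complex.ofReal_mul, Complex.ofReal_cpow hx0, Complex.ofReal_cpow hx1]
      push_cast
      ring
    rw [setIntegral_congr_fun measurableSet_Ioo hfun]
    exact integral_ofReal
  rw [← Complex.ofReal_inj, ← h2, h1]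

lemma Gamma_add_nat_eq (x : ℝ) (hx : 0 < x) (m : ℕ) :
    Real.Gamma (x + m) = Real.Gamma x * ∏ k ∈ Finset.range m, (x + k) := by
  induction m with
  | zero => simp
  | succ m ih =>
    have h : x + (m + 1 : ℕ) = (x + m) + 1 := by push_cast; ring
    rw [h, Real.Gamma_add_one (by positivity), ih, Finset.prod_range_succ]
    ring

/-- Beta-binomial similarity for binary covariates: with `s = Σ x_i` successes out of
`n`, `g s = ∫₀¹ θ^s (1-θ)^{n-s} Beta(θ; α, α) dθ = B(α+s, α+n-s)/B(α,α)`, and `g`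
is maximized over `s ∈ {0,…,n}` at the extremes `s = 0` and `s = n`,
i.e., when all binary values in the cluster are equal. -/
theorem beta_binomial_similarity_maximized_at_extremes (n : ℕ) (α : ℝ) (hα : 0 < α)
    (g : ℕ → ℝ)
    (hg : ∀ s : ℕ, g s =
      ∫ θ in Set.Ioo (0 : ℝ) 1, θ ^ (s : ℝ) * (1 - θ) ^ ((n : ℝ) - s) * betaPdf α θ) :
    (∀ s : ℕ, s ≤ n →
      g s = betaFn (α + s) (α + ((n : ℝ) - s)) / betaFn α α) ∧
    (∀ s : ℕ, s ≤ n → g s ≤ g 0 ∧ g s ≤ g n) ∧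
    g 0 = g n := by
  have hB : 0 < betaFn α α := betaFn_pos hα hα
  -- Part 1: the closed form.
  have key : ∀ s : ℕ, s ≤ n →
      g s = betaFn (α + s) (α + ((n : ℝ) - s)) / betaFn α α := by
    intro s hs
    have hns : (0:ℝ) ≤ (n : ℝ) - s := by
      have : (s:ℝ) ≤ n := by exact_mod_cast hs
      linarith
    rw [hg s]
    have hcong : ∀ θ ∈ Set.Ioo (0:ℝ) 1,
        θ ^ (s : ℝ) * (1 - θ) ^ ((n : ℝ) - s) * betaPdf α θ
          = θ ^ ((α + s) - 1) * (1 - θ) ^ ((α + ((n:ℝ) - s)) - 1) / betaFn α α := by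
      intro θ hθ
      have h1 : (0:ℝ) < θ := hθ.1
      have h2 : (0:ℝ) < 1 - θ := by linarith [hθ.2]
      rw [betaPdf]
      rw [show ((α + s) - 1 : ℝ) = (s : ℝ) + (α - 1) by ring,
        show ((α + ((n:ℝ) - s)) - 1 : ℝ) = ((n:ℝ) - s) + (α - 1) by ring,
        Real.rpow_add h1, Real.rpow_add h2]
      ring
    rw [setIntegral_congr_fun measurableSet_Ioo hcong, integral_div,
      real_betaIntegral (by positivity) (by positivity)]
  have hsymm : ∀ x y : ℝ, betaFn x y = betaFn y x := by
    intro x y; unfold betaFn; rw [mul_comm, add_comm]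
  have h0n : g 0 = g n := by
    rw [key 0 (Nat.zero_le n), key n le_rfl]
    simp only [Nat.cast_zero, sub_zero, sub_self, add_zero]
    rw [hsymm]
  -- Part 2: the inequality.
  have hineq : ∀ s : ℕ, s ≤ n → g s ≤ g 0 := by
    intro s hs
    rw [key s hs, key 0 (Nat.zero_le n)]
    simp only [Nat.cast_zero, sub_zero, add_zero]
    have hmain : betaFn (α + s) (α + ((n:ℝ) - s)) ≤ betaFn α (α + n) := by
      unfold betaFn
      have heq : α + (s:ℝ) + (α + ((n:ℝ) - s)) = α + (α + n) := by ring
      rw [heq]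
      rw [div_le_div_iff_of_pos_right (Real.Gamma_pos_of_pos (by positivity))]
      -- Γ(α+s)Γ(α+(n-s)) ≤ Γ(α)Γ(α+n)
      set m : ℕ := n - s with hm
      have hnm : (n:ℝ) - s = (m:ℝ) := by
        rw [hm, Nat.cast_sub hs]
      have hΓs : Real.Gamma (α + s) = Real.Gamma α * ∏ k ∈ Finset.range s, (α + k) :=
        Gamma_add_nat_eq α hα s
      have hΓn : Real.Gamma (α + n) =
          Real.Gamma (α + m) * ∏ k ∈ Finset.range s, ((α + m) + k) := by
        have : α + (n:ℝ) = (α + m) + s := by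
          rw [hm, Nat.cast_sub hs]; ring
        rw [this, Gamma_add_nat_eq (α + m) (by positivity) s]
      rw [hnm, hΓs, hΓn]
      have hprod : ∏ k ∈ Finset.range s, (α + (k:ℝ))
          ≤ ∏ k ∈ Finset.range s, ((α + m) + k) := by
        apply Finset.prod_le_prod
        · intro k _; positivity
        · intro k _
          have : (0:ℝ) ≤ m := Nat.cast_nonneg m
          linarith
      have hΓα : 0 ≤ Real.Gamma α := (Real.Gamma_pos_of_pos hα).le
      have hΓm : 0 ≤ Real.Gamma (α + m) := (Real.Gamma_pos_of_pos (by positivity)).le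
      calc Real.Gamma α * (∏ k ∈ Finset.range s, (α + k)) * Real.Gamma (α + m)
          ≤ Real.Gamma α * (∏ k ∈ Finset.range s, ((α + m) + k)) * Real.Gamma (α + m) := by
            apply mul_le_mul_of_nonneg_right _ hΓm
            exact mul_le_mul_of_nonneg_left hprod hΓα
        _ = Real.Gamma α * (Real.Gamma (α + m) * ∏ k ∈ Finset.range s, ((α + m) + k)) := by
            ring
    exact (div_le_div_iff_of_pos_right hB).mpr hmain
  exact ⟨key, fun s hs => ⟨hineq s hs, h0n ▸ hineq s hs⟩, h0n⟩
end

section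
/- Let g(x*_k) = ∏_{j=1}^p g_j(x*_{kj}) where each g_j is defined as a marginal probability ∫ ∏_{i ∈ O_{kj}} q_j(x_{ij} | ξ) dq_j(ξ) over the observed entries O_{kj} for covariate j. Then for any missingness pattern, g(x*_k) equals the integral over all missing covariate values of the complete-data similarity ∏_j ∫ ∏_{i ∈ C_k} q_j(x_{ij} | ξ) dq_j(ξ). That is, skipping missing covariates in the similarity function is equivalent to marginalizing them under the auxiliary model. -/
open MeasureTheory Finset

/-! For each covariate separately, Fubini exchanges the integral over the missing values with the
integral against the prior. For a fixed parameter `ξ` the product over the cluster splits into the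
observed factors and one factor per missing entry, and each of the latter integrates to `1` because
`q j (· | ξ)` is a density. Integrating over the missing values of all covariates at once is an
integral over the product of these per-covariate spaces, so it factors by Fubini again. -/

section Curry

variable {ι : Type*} [Fintype ι] {κ : ι → Type*} [∀ i, Fintype (κ i)]
  {X : (i : ι) → κ i → Type*} [∀ i j, MeasurableSpace (X i j)]

theorem measurePreserving_piCurry_symm (μ : ∀ i j, Measure (X i j)) [∀ i j, SigmaFinite (μ i j)] :
    MeasurePreserving (MeasurableEquiv.piCurry X).symm
      (Measure.pi fun i ↦ Measure.pi fun j ↦ μ i j)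
      (Measure.pi fun p : (i : ι) × κ i ↦ μ p.1 p.2) := by
  refine ⟨(MeasurableEquiv.piCurry X).symm.measurable, (Measure.pi_eq fun s hs ↦ ?_).symm⟩
  have hpre : (MeasurableEquiv.piCurry X).symm ⁻¹' Set.univ.pi s =
      Set.univ.pi fun i ↦ Set.univ.pi fun j ↦ s ⟨i, j⟩ := by
    ext v
    simp [Set.mem_pi, Sigma.forall, Sigma.uncurry]
  rw [Measure.map_apply (MeasurableEquiv.piCurry X).symm.measurable (.univ_pi hs), hpre,
    Measure.pi_pi]
  simp_rw [Measure.pi_pi]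
  rw [← Finset.univ_sigma_univ, Finset.prod_sigma]

end Curry

section FillMissing

variable {ι α : Type*} [DecidableEq ι] [Zero α] {O C : Finset ι}

def fillMissing (O C : Finset ι) (y : ι → α) (v : ↥(C \ O) → α) (i : ι) : α :=
  if i ∈ O then y i else if h : i ∈ C \ O then v ⟨i, h⟩ else 0

theorem prod_fillMissing {M : Type*} [CommMonoid M] (hO : O ⊆ C) (f : α → M) (y : ι → α)
    (v : ↥(C \ O) → α) :
    ∏ i ∈ C, f (fillMissing O C y v i) = (∏ i ∈ O, f (y i)) * ∏ i, f (v i) := by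
  rw [← prod_sdiff hO, mul_comm, ← prod_attach (C \ O), univ_eq_attach]
  congr 1
  · exact prod_congr rfl fun i hi ↦ by rw [fillMissing, if_pos hi]
  · refine prod_congr rfl fun i _ ↦ ?_
    rw [fillMissing, if_neg (mem_sdiff.mp i.2).2, dif_pos i.2]

variable [MeasurableSpace α] {μ : Measure α} [SigmaFinite μ] {𝕜 : Type*} [RCLike 𝕜]

theorem integral_prod_fillMissing (hO : O ⊆ C) (f : α → 𝕜) (y : ι → α) :
    ∫ v, ∏ i ∈ C, f (fillMissing O C y v i) ∂Measure.pi (fun _ ↦ μ) =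
      (∏ i ∈ O, f (y i)) * (∫ x, f x ∂μ) ^ #(C \ O) := by
  simp_rw [prod_fillMissing hO]
  rw [integral_const_mul, integral_fintype_prod_eq_pow, Fintype.card_coe]

theorem integral_integral_prod_fillMissing {Ξ : Type*} [MeasurableSpace Ξ] {ν : Measure Ξ}
    [SFinite ν] (hO : O ⊆ C) (f : Ξ → α → 𝕜) (hf : ∀ ξ, ∫ x, f ξ x ∂μ = 1) (y : ι → α)
    (hint : Integrable (fun w : Ξ × (↥(C \ O) → α) ↦ ∏ i ∈ C, f w.1 (fillMissing O C y w.2 i))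
      (ν.prod (Measure.pi fun _ ↦ μ))) :
    ∫ v, ∫ ξ, ∏ i ∈ C, f ξ (fillMissing O C y v i) ∂ν ∂Measure.pi (fun _ ↦ μ) =
      ∫ ξ, ∏ i ∈ O, f ξ (y i) ∂ν := by
  rw [← integral_integral_swap hint]
  simp_rw [integral_prod_fillMissing hO, hf, one_pow, mul_one]

end FillMissing

theorem skipping_equals_marginalizing_general
    {ι : Type*} [DecidableEq ι]
    {Ξ : Type*} [MeasurableSpace Ξ]
    (p : ℕ) (C : Finset ι) (O : Fin p → Finset ι) (hO : ∀ j, O j ⊆ C)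
    (ν : Fin p → Measure Ξ) [∀ j, IsProbabilityMeasure (ν j)]
    (q : Fin p → Ξ → ℝ → ℝ)
    (hq_density : ∀ j ξ, ∫ x : ℝ, q j ξ x = 1)
    (x : ι → Fin p → ℝ)
    (hFub : ∀ j, Integrable
      (fun w : Ξ × (↥(C \ O j) → ℝ) =>
        ∏ i ∈ C, q j w.1
          (if h : i ∈ O j then x i j else
            if h2 : i ∈ C \ O j then w.2 ⟨i, h2⟩ else 0))
      ((ν j).prod volume)) :
    (∫ u : ((j : Fin p) × ↥(C \ O j)) → ℝ,
      ∏ j, ∫ ξ, (∏ i ∈ C, q j ξ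
        (if h : i ∈ O j then x i j else
          if h2 : i ∈ C \ O j then u ⟨j, ⟨i, h2⟩⟩ else 0)) ∂(ν j)) =
    ∏ j, ∫ ξ, (∏ i ∈ O j, q j ξ (x i j)) ∂(ν j) := by
  rw [volume_pi, ← (measurePreserving_piCurry_symm (X := fun _ _ ↦ ℝ) fun _ _ ↦ volume).integral_comp']
  exact (integral_fintype_prod_eq_prod fun j (w : ↥(C \ O j) → ℝ) ↦
      ∫ ξ, ∏ i ∈ C, q j ξ (fillMissing (O j) C (fun i ↦ x i j) w i) ∂ν j).trans <|
    prod_congr rfl fun j _ ↦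
      integral_integral_prod_fillMissing (hO j) (q j) (hq_density j) (fun i ↦ x i j) (hFub j)

/-- Skipping missing covariates in the PPMx similarity function is equivalent to
marginalizing them under the auxiliary model: with cluster `C`, observed sets
`O j ⊆ C` for each covariate `j`, auxiliary densities `q j (· | ξ)` with priors
`ν j`, the product of per-covariate marginals over observed entries equals the
integral, over all missing covariate values, of the complete-data similarity. -/
theorem skipping_equals_marginalizing
    {ι : Type*} [Fintype ι] [DecidableEq ι]
    {Ξ : Type*} [MeasurableSpace Ξ]
    (p : ℕ) (C : Finset ι) (O : Fin p → Finset ι) (hO : ∀ j, O j ⊆ C)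
    (ν : Fin p → Measure Ξ) [∀ j, IsProbabilityMeasure (ν j)]
    (q : Fin p → Ξ → ℝ → ℝ)
    (hq_nonneg : ∀ j ξ x, 0 ≤ q j ξ x)
    (hq_density : ∀ j ξ, ∫ x : ℝ, q j ξ x = 1)
    (x : ι → Fin p → ℝ)
    (hFub : ∀ j, Integrable
      (fun w : Ξ × (↥(C \ O j) → ℝ) =>
        ∏ i ∈ C, q j w.1
          (if h : i ∈ O j then x i j else
            if h2 : i ∈ C \ O j then w.2 ⟨i, h2⟩ else 0))
      ((ν j).prod volume))
    (hInt : Integrable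
      (fun u : ((j : Fin p) × ↥(C \ O j)) → ℝ =>
        ∏ j, ∫ ξ, (∏ i ∈ C, q j ξ
          (if h : i ∈ O j then x i j else
            if h2 : i ∈ C \ O j then u ⟨j, ⟨i, h2⟩⟩ else 0)) ∂(ν j))) :
    (∫ u : ((j : Fin p) × ↥(C \ O j)) → ℝ,
      ∏ j, ∫ ξ, (∏ i ∈ C, q j ξ
        (if h : i ∈ O j then x i j else
          if h2 : i ∈ C \ O j then u ⟨j, ⟨i, h2⟩⟩ else 0)) ∂(ν j)) =
    ∏ j, ∫ ξ, (∏ i ∈ O j, q j ξ (x i j)) ∂(ν j) :=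
  skipping_equals_marginalizing_general p C O hO ν q hq_density x hFub
end
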